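/- Let A be a real V×V matrix that is entrywise nonnegative, symmetric, and irreducible, let I ⊆ {1,…,V} be a nonempty set of indices, let P_m be the orthogonal projection of ℝ^V onto the coordinate subspace K_m = span{e_i : i ∈ I}, and let A_m = P_m A P_m. Let μ be a principal (Perron) eigenvector of A with eigenvalue λ, and let μ̃ ∈ K_m be a principal eigenvector of A_m with eigenvalue λ̃. Set γ = ‖P_m A (𝟙 − P_m)‖₂ (induced 2-norm) and δ = inf{‖(A_m − λ𝟙)z‖₂ : z ∈ K_m, z ⊥ μ̃, ‖z‖₂ = 1}. Assume P_m μ ≠ 0 and δ > 0. Then sin∠(P_m μ, μ̃) ≤ (γ/δ) · tan∠(μ, K_m), where ∠(P_m μ, μ̃) is the angle between the two vectors and tan∠(μ, K_m) = ‖(𝟙 − P_m)μ‖₂ / ‖P_m μ‖₂ is the tangent of the angle between μ and the subspace K_m. -/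
import Mathlib


open Matrix

/-- Euclidean norm of a finitely-indexed real vector. -/
noncomputable def eNorm {n : Type*} [Fintype n] (v : n → ℝ) : ℝ :=
  Real.sqrt (∑ i, v i ^ 2)

/-- Induced 2-norm (largest singular value) of a real matrix. -/
noncomputable def mNorm {m n : Type*} [Fintype m] [Fintype n] (A : Matrix m n ℝ) : ℝ :=
  sSup {y : ℝ | ∃ x : n → ℝ, eNorm x = 1 ∧ y = eNorm (A.mulVec x)}

/-- Sine of the angle between two vectors. -/
noncomputable def sinAngle {n : Type*} [Fintype n] (u v : n → ℝ) : ℝ :=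
  Real.sqrt (1 - ((∑ i, u i * v i) / (eNorm u * eNorm v)) ^ 2)

/-- The orthogonal projection matrix onto the coordinate subspace
`K_m = span{e_i : i ∈ I}`. -/
noncomputable def coordProj {V : ℕ} (I : Finset (Fin V)) : Matrix (Fin V) (Fin V) ℝ :=
  Matrix.diagonal fun i => if i ∈ I then 1 else 0

/-- A nonnegative matrix is irreducible if for every pair of indices some positive
power of the matrix has a positive entry there. -/
def MatrixIrreducible {V : ℕ} (A : Matrix (Fin V) (Fin V) ℝ) : Prop :=
  ∀ i j : Fin V, ∃ k : ℕ, 0 < k ∧ 0 < (A ^ k) i j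


section helpers
variable {n : Type*} [Fintype n]

lemma eNorm_nonneg' (v : n → ℝ) : 0 ≤ eNorm v := Real.sqrt_nonneg _

lemma eNorm_sq' (v : n → ℝ) : eNorm v ^ 2 = ∑ i, v i ^ 2 :=
  Real.sq_sqrt (Finset.sum_nonneg fun i _ => sq_nonneg _)

lemma eNorm_zero' : eNorm (0 : n → ℝ) = 0 := by simp [eNorm]

lemma eNorm_neg' (v : n → ℝ) : eNorm (-v) = eNorm v := by simp [eNorm]

lemma eNorm_pos' {v : n → ℝ} (h : v ≠ 0) : 0 < eNorm v := by
  obtain ⟨i, hi⟩ := Function.ne_iff.1 h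
  refine Real.sqrt_pos.2 (lt_of_lt_of_le (pow_pos (abs_pos.2 hi) 2) ?_)
  calc |v i| ^ 2 = v i ^ 2 := sq_abs _
    _ ≤ ∑ j, v j ^ 2 := Finset.single_le_sum (fun j _ => sq_nonneg (v j)) (Finset.mem_univ i)

lemma eNorm_smul' (c : ℝ) (v : n → ℝ) : eNorm (c • v) = |c| * eNorm v := by
  simp only [eNorm, Pi.smul_apply, smul_eq_mul, mul_pow, ← Finset.mul_sum]
  rw [Real.sqrt_mul (sq_nonneg c), Real.sqrt_sq_eq_abs]

lemma eNorm_mono' (u v : n → ℝ) (h : ∑ i, u i ^ 2 ≤ ∑ i, v i ^ 2) : eNorm u ≤ eNorm v :=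
  Real.sqrt_le_sqrt h

lemma symm_dot (M : Matrix n n ℝ) (h : M.IsSymm) (u v : n → ℝ) :
    ∑ i, u i * (M *ᵥ v) i = ∑ i, (M *ᵥ u) i * v i := by
  have h1 : (∑ i, u i * (M *ᵥ v) i) = u ⬝ᵥ (M *ᵥ v) := rfl
  have h2 : M *ᵥ u = u ᵥ* M := by rw [← h, Matrix.mulVec_transpose]; rw [h]
  rw [h1, Matrix.dotProduct_mulVec, ← h2]
  rfl
end helpers

/-- For a nonnegative symmetric irreducible matrix `A`, a nonempty
sample `I` with coordinate projector `P`, compression `Am = P A P`, principal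
eigenpairs `(lam, μ)` of `A` and `(lamt, μt)` of `Am` with `μt ∈ K_m`,
`γ = ‖P A (1 - P)‖₂` and
`δ = inf {‖(Am - lam 1) z‖₂ : z ∈ K_m, z ⊥ μt, ‖z‖₂ = 1}`, if `P μ ≠ 0` and `δ > 0`
then `sin∠(P μ, μt) ≤ (γ/δ) · tan∠(μ, K_m)`. -/
theorem stmt0 {V : ℕ} (A : Matrix (Fin V) (Fin V) ℝ)
    (hA_nonneg : ∀ i j, 0 ≤ A i j) (hA_symm : A.IsSymm) (hA_irr : MatrixIrreducible A)
    (I : Finset (Fin V)) (hI : I.Nonempty)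
    (P : Matrix (Fin V) (Fin V) ℝ) (hP : P = coordProj I)
    (Am : Matrix (Fin V) (Fin V) ℝ) (hAm : Am = P * A * P)
    (μ : Fin V → ℝ) (lam : ℝ) (hμ_ne : μ ≠ 0) (hμ : A.mulVec μ = lam • μ)
    (hlam_max : ∀ (lam' : ℝ) (x : Fin V → ℝ), x ≠ 0 → A.mulVec x = lam' • x → |lam'| ≤ lam)
    (μt : Fin V → ℝ) (lamt : ℝ) (hμt_ne : μt ≠ 0) (hμt_mem : P.mulVec μt = μt)
    (hμt : Am.mulVec μt = lamt • μt)
    (hlamt_max : ∀ (lam' : ℝ) (x : Fin V → ℝ), x ≠ 0 → Am.mulVec x = lam' • x → |lam'| ≤ lamt)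
    (γ δ : ℝ) (hγ : γ = mNorm (P * A * (1 - P)))
    (hδ : δ = sInf {y : ℝ | ∃ z : Fin V → ℝ, P.mulVec z = z ∧ (∑ i, z i * μt i) = 0 ∧
      eNorm z = 1 ∧ y = eNorm ((Am - lam • 1).mulVec z)})
    (hPμ : P.mulVec μ ≠ 0) (hδ_pos : 0 < δ) :
    sinAngle (P.mulVec μ) μt ≤ (γ / δ) * (eNorm ((1 - P).mulVec μ) / eNorm (P.mulVec μ)) := by
  classical
  -- basic projector facts
  have hPP : P * P = P := by
    subst hP
    rw [coordProj, Matrix.diagonal_mul_diagonal]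
    apply congrArg Matrix.diagonal
    funext i
    by_cases h : i ∈ I <;> simp [h]
  have hPsymm : P.IsSymm := hP ▸ Matrix.isSymm_diagonal _
  set p : Fin V → ℝ := P *ᵥ μ with hp_def
  set q : Fin V → ℝ := (1 - P) *ᵥ μ with hq_def
  have hq : q = μ - p := by rw [hq_def, Matrix.sub_mulVec, Matrix.one_mulVec]
  have hPp : P *ᵥ p = p := by rw [hp_def, Matrix.mulVec_mulVec, hPP]
  have hPq : P *ᵥ q = 0 := by rw [hq, Matrix.mulVec_sub, hPp, ← hp_def, sub_self]
  have hAmsymm : Am.IsSymm := by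
    rw [hAm, Matrix.IsSymm, Matrix.transpose_mul, Matrix.transpose_mul, hA_symm, hPsymm,
      Matrix.mul_assoc]
  set M : Matrix (Fin V) (Fin V) ℝ := Am - lam • 1 with hM_def
  have hMsymm : M.IsSymm := by
    rw [hM_def, Matrix.IsSymm, Matrix.transpose_sub, Matrix.transpose_smul,
      Matrix.transpose_one, hAmsymm]
  have hMμt : M *ᵥ μt = (lamt - lam) • μt := by
    rw [hM_def, Matrix.sub_mulVec, hμt, Matrix.smul_mulVec, Matrix.one_mulVec, sub_smul]
  -- decomposition of p
  have hntpos : 0 < eNorm μt := eNorm_pos' hμt_ne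
  set T2 : ℝ := ∑ i, μt i ^ 2 with hT2_def
  have hT2 : eNorm μt ^ 2 = T2 := eNorm_sq' μt
  have hT2pos : 0 < T2 := hT2 ▸ pow_pos hntpos 2
  set c : ℝ := (∑ i, p i * μt i) / T2 with hc_def
  set w : Fin V → ℝ := p - c • μt with hw_def
  have hcT2 : c * T2 = ∑ i, p i * μt i := div_mul_cancel₀ _ hT2pos.ne'
  have hw_orth : ∑ i, w i * μt i = 0 := by
    have e1 : ∀ i, w i * μt i = p i * μt i - c * μt i ^ 2 := by
      intro i; rw [hw_def]; simp [Pi.sub_apply]; ring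
    calc ∑ i, w i * μt i = (∑ i, p i * μt i) - c * T2 := by
          simp only [e1, Finset.sum_sub_distrib, hT2_def, Finset.mul_sum]
      _ = 0 := by rw [hcT2, sub_self]
  have hp_decomp : p = w + c • μt := by rw [hw_def]; abel
  have hp_sq : ∑ i, p i ^ 2 = (∑ i, w i ^ 2) + c ^ 2 * T2 := by
    have e1 : ∀ i, p i ^ 2 = w i ^ 2 + 2 * c * (w i * μt i) + c ^ 2 * μt i ^ 2 := by
      intro i
      have : p i = w i + c * μt i := by rw [hp_decomp]; simp
      rw [this]; ring
    calc ∑ i, p i ^ 2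
        = (∑ i, w i ^ 2) + 2 * c * (∑ i, w i * μt i) + c ^ 2 * T2 := by
          simp only [e1, Finset.sum_add_distrib, hT2_def, Finset.mul_sum]
      _ = (∑ i, w i ^ 2) + c ^ 2 * T2 := by rw [hw_orth]; ring
  have hnppos : 0 < eNorm p := eNorm_pos' hPμ
  -- sine formula
  have hsin : sinAngle p μt = eNorm w / eNorm p := by
    have hnp2 : eNorm p ^ 2 = (∑ i, w i ^ 2) + c ^ 2 * T2 := (eNorm_sq' p).trans hp_sq
    have hw2 : eNorm w ^ 2 = ∑ i, w i ^ 2 := eNorm_sq' w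
    have key : 1 - ((∑ i, p i * μt i) / (eNorm p * eNorm μt)) ^ 2 = (eNorm w / eNorm p) ^ 2 := by
      have h0 : (∑ i, w i ^ 2) + c ^ 2 * T2 ≠ 0 := hnp2 ▸ (pow_pos hnppos 2).ne'
      rw [← hcT2, div_pow, div_pow, mul_pow, mul_pow, hT2, hw2, hnp2]
      field_simp [h0, hT2pos.ne']
      ring
    rw [sinAngle, key, Real.sqrt_sq (div_nonneg (eNorm_nonneg' _) hnppos.le)]
  -- key identity : M p = - (P A (1-P)) μ
  set N : Matrix (Fin V) (Fin V) ℝ := P * A * (1 - P) with hN_def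
  have hNμ : N *ᵥ μ = P *ᵥ (A *ᵥ q) := by
    rw [hN_def, ← Matrix.mulVec_mulVec, ← Matrix.mulVec_mulVec, ← hq_def]
  have hMp : M *ᵥ p = -(N *ᵥ μ) := by
    have hAp : A *ᵥ p = lam • μ - A *ᵥ q := by
      have hpq : p = μ - q := by rw [hq]; abel
      rw [hpq, Matrix.mulVec_sub, hμ]
    have hAmp : Am *ᵥ p = lam • p - P *ᵥ (A *ᵥ q) := by
      rw [hAm, ← Matrix.mulVec_mulVec, ← Matrix.mulVec_mulVec, hPp, hAp, Matrix.mulVec_sub,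
        Matrix.mulVec_smul, ← hp_def]
    rw [hM_def, Matrix.sub_mulVec, hAmp, Matrix.smul_mulVec, Matrix.one_mulVec, hNμ]
    abel
  -- orthogonality of M w and μt
  have horth : ∑ i, (M *ᵥ w) i * μt i = 0 := by
    rw [← symm_dot M hMsymm w μt, hMμt]
    calc ∑ i, w i * ((lamt - lam) • μt) i = (lamt - lam) * ∑ i, w i * μt i := by
          rw [Finset.mul_sum]; exact Finset.sum_congr rfl fun i _ => by
            simp [Pi.smul_apply]; ring
      _ = 0 := by rw [hw_orth, mul_zero]
  -- ‖M w‖ ≤ ‖M p‖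
  have hMw_le : eNorm (M *ᵥ w) ≤ eNorm (M *ᵥ p) := by
    have hMpw : M *ᵥ p = M *ᵥ w + (c * (lamt - lam)) • μt := by
      rw [hp_decomp, Matrix.mulVec_add, Matrix.mulVec_smul, hMμt, smul_smul]
    apply eNorm_mono'
    have e1 : ∀ i, (M *ᵥ p) i ^ 2 = (M *ᵥ w) i ^ 2
        + 2 * (c * (lamt - lam)) * ((M *ᵥ w) i * μt i)
        + (c * (lamt - lam)) ^ 2 * μt i ^ 2 := by
      intro i
      have : (M *ᵥ p) i = (M *ᵥ w) i + (c * (lamt - lam)) * μt i := by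
        rw [hMpw]; simp
      rw [this]; ring
    have : ∑ i, (M *ᵥ p) i ^ 2 = (∑ i, (M *ᵥ w) i ^ 2)
        + 2 * (c * (lamt - lam)) * (∑ i, (M *ᵥ w) i * μt i)
        + (c * (lamt - lam)) ^ 2 * T2 := by
      simp only [e1, Finset.sum_add_distrib, hT2_def, Finset.mul_sum]
    rw [this, horth]
    nlinarith [sq_nonneg (c * (lamt - lam)), hT2pos.le]
  -- δ ‖w‖ ≤ ‖M w‖
  have hPw : P *ᵥ w = w := by
    rw [hw_def, Matrix.mulVec_sub, Matrix.mulVec_smul, hPp, hμt_mem]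
  have hδw : δ * eNorm w ≤ eNorm (M *ᵥ w) := by
    by_cases hw0 : w = 0
    · simp [hw0, Matrix.mulVec_zero, eNorm_zero']
    · have hnw : 0 < eNorm w := eNorm_pos' hw0
      set z : Fin V → ℝ := (eNorm w)⁻¹ • w with hz_def
      have hz1 : P *ᵥ z = z := by rw [hz_def, Matrix.mulVec_smul, hPw]
      have hz2 : ∑ i, z i * μt i = 0 := by
        rw [hz_def]
        calc ∑ i, ((eNorm w)⁻¹ • w) i * μt i = (eNorm w)⁻¹ * ∑ i, w i * μt i := by
              rw [Finset.mul_sum]; exact Finset.sum_congr rfl fun i _ => by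
                simp [Pi.smul_apply]; ring
          _ = 0 := by rw [hw_orth, mul_zero]
      have hz3 : eNorm z = 1 := by
        rw [hz_def, eNorm_smul', abs_of_pos (inv_pos.2 hnw), inv_mul_cancel₀ hnw.ne']
      have hval : eNorm (M *ᵥ z) = (eNorm w)⁻¹ * eNorm (M *ᵥ w) := by
        rw [hz_def, Matrix.mulVec_smul, eNorm_smul', abs_of_pos (inv_pos.2 hnw)]
      have hmem : eNorm (M *ᵥ z) ∈ {y : ℝ | ∃ z : Fin V → ℝ, P.mulVec z = z ∧
          (∑ i, z i * μt i) = 0 ∧ eNorm z = 1 ∧ y = eNorm ((Am - lam • 1).mulVec z)} :=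
        ⟨z, hz1, hz2, hz3, rfl⟩
      have hbdd : BddBelow {y : ℝ | ∃ z : Fin V → ℝ, P.mulVec z = z ∧
          (∑ i, z i * μt i) = 0 ∧ eNorm z = 1 ∧ y = eNorm ((Am - lam • 1).mulVec z)} :=
        ⟨0, fun y ⟨z', _, _, _, hy⟩ => hy ▸ eNorm_nonneg' _⟩
      have hδle : δ ≤ (eNorm w)⁻¹ * eNorm (M *ᵥ w) := by
        rw [← hval]; rw [hδ]; exact csInf_le hbdd hmem
      calc δ * eNorm w ≤ ((eNorm w)⁻¹ * eNorm (M *ᵥ w)) * eNorm w :=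
            mul_le_mul_of_nonneg_right hδle hnw.le
        _ = eNorm (M *ᵥ w) := by field_simp
  -- ‖N μ‖ ≤ γ ‖q‖
  have hNq : N *ᵥ q = N *ᵥ μ := by
    have h1P : (1 - P) *ᵥ q = q := by
      rw [Matrix.sub_mulVec, Matrix.one_mulVec, hPq, sub_zero]
    rw [hNμ, hN_def, ← Matrix.mulVec_mulVec, ← Matrix.mulVec_mulVec, h1P]
  have hγq : eNorm (N *ᵥ μ) ≤ γ * eNorm q := by
    by_cases hq0 : q = 0
    · rw [← hNq, hq0, Matrix.mulVec_zero, eNorm_zero', mul_zero]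
    · have hnq : 0 < eNorm q := eNorm_pos' hq0
      have hbdd : BddAbove {y : ℝ | ∃ x : Fin V → ℝ, eNorm x = 1 ∧ y = eNorm (N *ᵥ x)} := by
        refine ⟨Real.sqrt (∑ i, ∑ j, N i j ^ 2), fun y hy => ?_⟩
        obtain ⟨x, hx, rfl⟩ := hy
        apply Real.sqrt_le_sqrt
        refine Finset.sum_le_sum fun i _ => ?_
        have h1 : (N *ᵥ x) i = ∑ j, N i j * x j := by
          simp [Matrix.mulVec, dotProduct]
        have h2 : (∑ j, N i j * x j) ^ 2 ≤ (∑ j, N i j ^ 2) * ∑ j, x j ^ 2 :=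
          Finset.sum_mul_sq_le_sq_mul_sq _ _ _
        have h3 : ∑ j, x j ^ 2 = 1 := by
          have := eNorm_sq' x
          rw [hx, one_pow] at this; exact this.symm
        rw [h1]
        calc (∑ j, N i j * x j) ^ 2 ≤ (∑ j, N i j ^ 2) * ∑ j, x j ^ 2 := h2
          _ = ∑ j, N i j ^ 2 := by rw [h3, mul_one]
      set x : Fin V → ℝ := (eNorm q)⁻¹ • q with hx_def
      have hx1 : eNorm x = 1 := by
        rw [hx_def, eNorm_smul', abs_of_pos (inv_pos.2 hnq), inv_mul_cancel₀ hnq.ne']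
      have hmem : eNorm (N *ᵥ x) ∈ {y : ℝ | ∃ x : Fin V → ℝ, eNorm x = 1 ∧
          y = eNorm (N *ᵥ x)} := ⟨x, hx1, rfl⟩
      have hval : eNorm (N *ᵥ x) = (eNorm q)⁻¹ * eNorm (N *ᵥ μ) := by
        rw [hx_def, Matrix.mulVec_smul, hNq, eNorm_smul', abs_of_pos (inv_pos.2 hnq)]
      have hγle : (eNorm q)⁻¹ * eNorm (N *ᵥ μ) ≤ γ := by
        rw [← hval, hγ]; exact le_csSup hbdd hmem
      calc eNorm (N *ᵥ μ) = ((eNorm q)⁻¹ * eNorm (N *ᵥ μ)) * eNorm q := by field_simp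
        _ ≤ γ * eNorm q := mul_le_mul_of_nonneg_right hγle hnq.le
  -- final chain
  have hchain : δ * eNorm w ≤ γ * eNorm q := by
    calc δ * eNorm w ≤ eNorm (M *ᵥ w) := hδw
      _ ≤ eNorm (M *ᵥ p) := hMw_le
      _ = eNorm (N *ᵥ μ) := by rw [hMp, eNorm_neg']
      _ ≤ γ * eNorm q := hγq
  have hwle : eNorm w ≤ γ * eNorm q / δ := by
    rw [le_div_iff₀ hδ_pos]
    linarith [hchain]
  show sinAngle p μt ≤ γ / δ * (eNorm q / eNorm p)
  rw [hsin]
  have : γ / δ * (eNorm q / eNorm p) = (γ * eNorm q / δ) / eNorm p := by ring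
  rw [this]
  exact (div_le_div_iff_of_pos_right hnppos).mpr hwle
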